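/- Let C be a saturated two-layer comparator network on n channels, and let i and j be two distinct channels, neither of which is used by a comparator of the second layer of C, that are not joined to each other by a first-layer comparator. Then: (i) both i and j are used by comparators of the first layer; (ii) i and j are both min-channels or both max-channels; and (iii) the channel joined to i by a first-layer comparator and the channel joined to j by a first-layer comparator are not joined to each other by a second-layer comparator. -/
import Mathlib


namespace SN

open scoped Classical

/-- A comparator on `n` channels: a pair of channels. -/
abbrev Comp (n : ℕ) := Fin n × Fin n

/-- A layer is a finite set of comparators. -/
abbrev Layer (n : ℕ) := Finset (Comp n)

/-- A comparator network is a sequence (list) of layers; its depth is the length. -/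
abbrev Net (n : ℕ) := List (Layer n)

/-- Each channel is used by at most one comparator of the layer. -/
def NoOverlap {n : ℕ} (L : Layer n) : Prop :=
  ∀ c ∈ L, ∀ c' ∈ L, c ≠ c' →
    c.1 ≠ c'.1 ∧ c.1 ≠ c'.2 ∧ c.2 ≠ c'.1 ∧ c.2 ≠ c'.2

/-- A (standard) layer: comparators `(i,j)` with `i < j`, channels pairwise disjoint. -/
def IsLayer {n : ℕ} (L : Layer n) : Prop :=
  (∀ c ∈ L, c.1 < c.2) ∧ NoOverlap L

/-- A generalized layer: comparators `(i,j)` with `i ≠ j` allowed in any order. -/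
def IsGenLayer {n : ℕ} (L : Layer n) : Prop :=
  (∀ c ∈ L, c.1 ≠ c.2) ∧ NoOverlap L

def IsNet {n : ℕ} (C : Net n) : Prop := ∀ L ∈ C, IsLayer L

def IsGenNet {n : ℕ} (C : Net n) : Prop := ∀ L ∈ C, IsGenLayer L

/-- Apply one layer to a Boolean vector: a comparator `(i,j)` puts the min
(`&&`) on channel `i` and the max (`||`) on channel `j`. -/
noncomputable def applyLayer {n : ℕ} (L : Layer n) (x : Fin n → Bool) : Fin n → Bool :=
  fun k =>
    if h1 : ∃ c ∈ L, c.1 = k then x h1.choose.1 && x h1.choose.2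
    else if h2 : ∃ c ∈ L, c.2 = k then x h2.choose.1 || x h2.choose.2
    else x k

/-- Run a comparator network on a Boolean input (layers applied in sequence). -/
noncomputable def run {n : ℕ} (C : Net n) (x : Fin n → Bool) : Fin n → Bool :=
  C.foldl (fun y L => applyLayer L y) x

/-- Ascendingly sorted Boolean vector. -/
def BSorted {n : ℕ} (x : Fin n → Bool) : Prop :=
  ∀ i j : Fin n, i ≤ j → x i ≤ x j

/-- A sorting network: a comparator network sorting every Boolean input. -/
def IsSortingNet {n : ℕ} (C : Net n) : Prop :=
  IsNet C ∧ ∀ x : Fin n → Bool, BSorted (run C x)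

/-- The set of outputs of a network on all Boolean inputs. -/
def outputs {n : ℕ} (C : Net n) : Set (Fin n → Bool) := Set.range (run C)

/-- Apply one layer to a vector of naturals. -/
noncomputable def applyLayerN {n : ℕ} (L : Layer n) (x : Fin n → ℕ) : Fin n → ℕ :=
  fun k =>
    if h1 : ∃ c ∈ L, c.1 = k then min (x h1.choose.1) (x h1.choose.2)
    else if h2 : ∃ c ∈ L, c.2 = k then max (x h2.choose.1) (x h2.choose.2)
    else x k

noncomputable def runN {n : ℕ} (C : Net n) (x : Fin n → ℕ) : Fin n → ℕ :=
  C.foldl (fun y L => applyLayerN L y) x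

def NSorted {n : ℕ} (x : Fin n → ℕ) : Prop :=
  ∀ i j : Fin n, i ≤ j → x i ≤ x j

/-- Permute the coordinates of a Boolean vector by `π` (channel `k`'s value
moves to channel `π k`). -/
def permVec {n : ℕ} (π : Equiv.Perm (Fin n)) (x : Fin n → Bool) : Fin n → Bool :=
  fun i => x (π.symm i)

/-- The image of a set of Boolean vectors under coordinate permutation by `π`. -/
def permSet {n : ℕ} (π : Equiv.Perm (Fin n)) (X : Set (Fin n → Bool)) :
    Set (Fin n → Bool) :=
  permVec π '' X

/-- The image `π(L)` of a layer under a permutation of channels. -/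
def permLayer {n : ℕ} (π : Equiv.Perm (Fin n)) (L : Layer n) : Layer n :=
  L.image fun c => (π c.1, π c.2)

/-- Channel `i` is used by some comparator of the layer `L`. -/
def usedIn {n : ℕ} (L : Layer n) (i : Fin n) : Prop := ∃ c ∈ L, c.1 = i ∨ c.2 = i

/-- Channels `i` and `j` are joined by a comparator of `L`. -/
def Joined {n : ℕ} (L : Layer n) (i j : Fin n) : Prop := (i, j) ∈ L ∨ (j, i) ∈ L

/-- `i` is the smaller channel of some comparator of `L` (a min-channel). -/
def MinChan {n : ℕ} (L : Layer n) (i : Fin n) : Prop := ∃ c ∈ L, c.1 = i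

/-- `i` is the larger channel of some comparator of `L` (a max-channel). -/
def MaxChan {n : ℕ} (L : Layer n) (i : Fin n) : Prop := ∃ c ∈ L, c.2 = i

/-- A two-layer network `[L1, L2]` is redundant if some comparator can be removed
so that the outputs of the result are a permutation of the original outputs. -/
def Redundant {n : ℕ} (L1 L2 : Layer n) : Prop :=
  ∃ π : Equiv.Perm (Fin n),
    (∃ c ∈ L1, outputs [L1.erase c, L2] = permSet π (outputs [L1, L2])) ∨
    (∃ c ∈ L2, outputs [L1, L2.erase c] = permSet π (outputs [L1, L2]))

/-- A two-layer network `[L1, L2]` is saturated if it is non-redundant and no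
comparator on two channels unused in the second layer can be added to the second
layer so as to make the output set a proper subset of a permutation of the
original output set. -/
def Saturated {n : ℕ} (L1 L2 : Layer n) : Prop :=
  ¬ Redundant L1 L2 ∧
  ¬ ∃ (c : Comp n) (π : Equiv.Perm (Fin n)),
      c.1 < c.2 ∧ ¬ usedIn L2 c.1 ∧ ¬ usedIn L2 c.2 ∧
      outputs [L1, insert c L2] ⊂ permSet π (outputs [L1, L2])

/-- Vertices of the graph representation of `C`: the comparators of `C`,
tagged with the index of the layer containing them. -/
def Vertex {n : ℕ} (C : Net n) := {p : ℕ × Comp n // p.2 ∈ C.getD p.1 ∅}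

/-- The channel carrying the min output (`b = false`, label 1) or max output
(`b = true`, label 2) of a comparator. -/
def outChan {n : ℕ} (c : Comp n) (b : Bool) : Fin n := if b then c.2 else c.1

/-- An edge with label `b` (1 for min, 2 for max) from comparator `u` to
comparator `v`: the corresponding output of `u` is an input of `v`, i.e. `v`
is the next comparator on that channel. -/
def Edge {n : ℕ} (C : Net n) (b : Bool) (u v : ℕ × Comp n) : Prop :=
  u.1 < v.1 ∧ (outChan u.2 b = v.2.1 ∨ outChan u.2 b = v.2.2) ∧
  ∀ m, u.1 < m → m < v.1 → ¬ usedIn (C.getD m ∅) (outChan u.2 b)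

/-- The graph representations of `C` and `D` are isomorphic: a bijection of
comparators preserving the labeled edges. -/
def GraphIso {n m : ℕ} (C : Net n) (D : Net m) : Prop :=
  ∃ f : Vertex C ≃ Vertex D,
    ∀ (b : Bool) (u v : Vertex C),
      Edge C b u.val v.val ↔ Edge D b (f u).val (f v).val

/-- The graph representation of `C` is connected. -/
def GraphConnected {n : ℕ} (C : Net n) : Prop :=
  ∀ u v : Vertex C,
    Relation.ReflTransGen
      (fun a b : Vertex C => ∃ ℓ : Bool, Edge C ℓ a.val b.val ∨ Edge C ℓ b.val a.val) u v

/-- Reflection of a comparator: `(i,j) ↦ (n-j+1, n-i+1)` (in 1-based terms). -/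
def reflectComp {n : ℕ} (c : Comp n) : Comp n := (c.2.rev, c.1.rev)

def reflectLayer {n : ℕ} (L : Layer n) : Layer n := L.image reflectComp

/-- Reflection `C^R` of a comparator network. -/
def reflect {n : ℕ} (C : Net n) : Net n := C.map reflectLayer

/-- The first layer `F_n = {(2i-1, 2i) : 1 ≤ i ≤ ⌊n/2⌋}` (0-indexed: `(2i, 2i+1)`). -/
def FLayer (n : ℕ) : Layer n :=
  Finset.univ.filter fun c : Comp n => c.1.val % 2 = 0 ∧ c.2.val = c.1.val + 1

/-- The two-layer networks with first layer `F_n`, parametrized by second layer. -/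
def SecondLayers (n : ℕ) := {L : Layer n // IsLayer L}

/-- The number `|R(G_n)|` of equivalence classes of two-layer networks with
first layer `F_n`, under graph isomorphism `≈`. -/
noncomputable def numClasses (n : ℕ) : ℕ :=
  Nat.card (Quot fun L L' : SecondLayers n =>
    GraphIso ([FLayer n, L.val] : Net n) ([FLayer n, L'.val] : Net n))

/-- Redundant two-layer networks with first layer `F_n`. -/
def RedLayers (n : ℕ) := {L : Layer n // IsLayer L ∧ Redundant (FLayer n) L}

/-- The number of equivalence classes of redundant two-layer networks with
first layer `F_n`, under graph isomorphism `≈`. -/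
noncomputable def numRedClasses (n : ℕ) : ℕ :=
  Nat.card (Quot fun L L' : RedLayers n =>
    GraphIso ([FLayer n, L.val] : Net n) ([FLayer n, L'.val] : Net n))

section Aux

variable {n : ℕ}

lemma unique_of_mem {L : Layer n} (hL : NoOverlap L) {c c' : Comp n}
    (hc : c ∈ L) (hc' : c' ∈ L)
    (h : c.1 = c'.1 ∨ c.1 = c'.2 ∨ c.2 = c'.1 ∨ c.2 = c'.2) : c = c' := by
  by_contra hne
  obtain ⟨h1, h2, h3, h4⟩ := hL c hc c' hc' hne
  tauto

lemma applyLayer_fst {L : Layer n} (hL : NoOverlap L) {a b : Fin n}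
    (hab : (a, b) ∈ L) (x : Fin n → Bool) : applyLayer L x a = (x a && x b) := by
  have h1 : ∃ c ∈ L, c.1 = a := ⟨(a, b), hab, rfl⟩
  unfold applyLayer
  rw [dif_pos h1]
  obtain ⟨hmem, hfst⟩ := h1.choose_spec
  have he : h1.choose = (a, b) := unique_of_mem hL hmem hab (Or.inl (by rw [hfst]))
  rw [he]

lemma applyLayer_snd {L : Layer n} (hL : NoOverlap L)
    (hne : ∀ c ∈ L, c.1 ≠ c.2) {a b : Fin n}
    (hab : (a, b) ∈ L) (x : Fin n → Bool) : applyLayer L x b = (x a || x b) := by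
  have h1 : ¬ ∃ c ∈ L, c.1 = b := by
    rintro ⟨c, hc, h⟩
    have he : c = (a, b) := unique_of_mem hL hc hab (Or.inr (Or.inl (by rw [h])))
    rw [he] at h
    exact hne _ hab h
  have h2 : ∃ c ∈ L, c.2 = b := ⟨(a, b), hab, rfl⟩
  unfold applyLayer
  rw [dif_neg h1, dif_pos h2]
  obtain ⟨hmem, hsnd⟩ := h2.choose_spec
  have he : h2.choose = (a, b) := unique_of_mem hL hmem hab (Or.inr (Or.inr (Or.inr (by rw [hsnd]))))
  rw [he]

lemma applyLayer_unused {L : Layer n} {k : Fin n} (h : ¬ usedIn L k)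
    (x : Fin n → Bool) : applyLayer L x k = x k := by
  have h1 : ¬ ∃ c ∈ L, c.1 = k := fun ⟨c, hc, hk⟩ => h ⟨c, hc, Or.inl hk⟩
  have h2 : ¬ ∃ c ∈ L, c.2 = k := fun ⟨c, hc, hk⟩ => h ⟨c, hc, Or.inr hk⟩
  unfold applyLayer
  rw [dif_neg h1, dif_neg h2]

lemma applyLayer_congr {L : Layer n} {x x' : Fin n → Bool} {m : Fin n}
    (h : ∀ r, (r = m ∨ ∃ c ∈ L, (c.1 = m ∨ c.2 = m) ∧ (c.1 = r ∨ c.2 = r)) → x r = x' r) :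
    applyLayer L x m = applyLayer L x' m := by
  unfold applyLayer
  by_cases h1 : ∃ c ∈ L, c.1 = m
  · rw [dif_pos h1, dif_pos h1]
    obtain ⟨hc, hc1⟩ := h1.choose_spec
    rw [h _ (Or.inr ⟨h1.choose, hc, Or.inl hc1, Or.inl rfl⟩),
        h _ (Or.inr ⟨h1.choose, hc, Or.inl hc1, Or.inr rfl⟩)]
  · rw [dif_neg h1, dif_neg h1]
    by_cases h2 : ∃ c ∈ L, c.2 = m
    · rw [dif_pos h2, dif_pos h2]
      obtain ⟨hc, hc2⟩ := h2.choose_spec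
      rw [h _ (Or.inr ⟨h2.choose, hc, Or.inr hc2, Or.inl rfl⟩),
          h _ (Or.inr ⟨h2.choose, hc, Or.inr hc2, Or.inr rfl⟩)]
    · rw [dif_neg h2, dif_neg h2]
      exact h m (Or.inl rfl)

lemma run_two (L1 L2 : Layer n) (x : Fin n → Bool) :
    run [L1, L2] x = applyLayer L2 (applyLayer L1 x) := rfl

lemma status (L : Layer n) (k : Fin n) :
    ¬ usedIn L k ∨ (∃ p, (k, p) ∈ L) ∨ (∃ p, (p, k) ∈ L) := by
  by_cases h : usedIn L k
  · obtain ⟨c, hc, hk | hk⟩ := h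
    · exact Or.inr (Or.inl ⟨c.2, by rw [← hk, Prod.mk.eta]; exact hc⟩)
    · exact Or.inr (Or.inr ⟨c.1, by rw [← hk, Prod.mk.eta]; exact hc⟩)
  · exact Or.inl h

end Aux
section Flip

variable {n : ℕ}

lemma step_unused {L : Layer n} {k : Fin n} (hk : ¬ usedIn L k)
    (x : Fin n → Bool) (v : Bool) :
    applyLayer L (Function.update x k v) = Function.update (applyLayer L x) k v := by
  funext m
  by_cases hm : m = k
  · subst hm
    rw [applyLayer_unused hk, Function.update_self, Function.update_self]
  · rw [Function.update_of_ne hm]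
    apply applyLayer_congr
    intro r hr
    have hrk : r ≠ k := by
      rcases hr with rfl | ⟨c, hc, hcm, hcr⟩
      · exact hm
      · rintro rfl
        exact hk ⟨c, hc, hcr⟩
    rw [Function.update_of_ne hrk]

lemma step_min {L : Layer n} (hL : IsLayer L) {k p : Fin n} (hkp : (k, p) ∈ L)
    {x : Fin n → Bool} (hxk : x k = true) (hxp : x p = true) :
    applyLayer L (Function.update x k false) = Function.update (applyLayer L x) k false := by
  have hne : ∀ c ∈ L, c.1 ≠ c.2 := fun c hc => ne_of_lt (hL.1 c hc)
  have hkp' : k ≠ p := hne _ hkp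
  funext m
  by_cases hm : m = k
  · subst hm
    rw [applyLayer_fst hL.2 hkp, Function.update_self, Function.update_self,
      Bool.false_and]
  · rw [Function.update_of_ne hm]
    by_cases hmp : m = p
    · subst hmp
      rw [applyLayer_snd hL.2 hne hkp, applyLayer_snd hL.2 hne hkp,
        Function.update_self, Function.update_of_ne hkp'.symm, hxk, hxp]
      rfl
    · apply applyLayer_congr
      intro r hr
      have hrk : r ≠ k := by
        intro hrk0
        rcases hr with rfl | ⟨c, hc, hcm, hcr⟩
        · exact hm hrk0
        · rw [hrk0] at hcr
          have he : c = (k, p) := unique_of_mem hL.2 hc hkp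
            (by rcases hcr with h | h
                · exact Or.inl h
                · exact Or.inr (Or.inr (Or.inl h)))
          rw [he] at hcm
          rcases hcm with h | h
          · exact hm h.symm
          · exact hmp h.symm
      rw [Function.update_of_ne hrk]

lemma step_max {L : Layer n} (hL : IsLayer L) {k p : Fin n} (hpk : (p, k) ∈ L)
    {x : Fin n → Bool} (hxp : x p = false) (hxk : x k = false) :
    applyLayer L (Function.update x k true) = Function.update (applyLayer L x) k true := by
  have hne : ∀ c ∈ L, c.1 ≠ c.2 := fun c hc => ne_of_lt (hL.1 c hc)
  have hpk' : p ≠ k := hne _ hpk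
  funext m
  by_cases hm : m = k
  · subst hm
    rw [applyLayer_snd hL.2 hne hpk, Function.update_self, Function.update_self,
      Bool.or_true]
  · rw [Function.update_of_ne hm]
    by_cases hmp : m = p
    · subst hmp
      rw [applyLayer_fst hL.2 hpk, applyLayer_fst hL.2 hpk,
        Function.update_self, Function.update_of_ne hpk', hxp]
      rfl
    · apply applyLayer_congr
      intro r hr
      have hrk : r ≠ k := by
        intro hrk0
        rcases hr with rfl | ⟨c, hc, hcm, hcr⟩
        · exact hm hrk0
        · rw [hrk0] at hcr
          have he : c = (p, k) := unique_of_mem hL.2 hc hpk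
            (by rcases hcr with h | h
                · exact Or.inr (Or.inl h)
                · exact Or.inr (Or.inr (Or.inr h)))
          rw [he] at hcm
          rcases hcm with h | h
          · exact hmp h.symm
          · exact hm h.symm
      rw [Function.update_of_ne hrk]

variable {L1 L2 : Layer n}

lemma flip_free (hk1 : ¬ usedIn L1 k) (hk2 : ¬ usedIn L2 k) (x : Fin n → Bool) (v : Bool) :
    run [L1, L2] (Function.update x k v) = Function.update (run [L1, L2] x) k v := by
  rw [run_two, run_two, step_unused hk1, step_unused hk2]

lemma flip_min (h1 : IsLayer L1) {k p : Fin n} (hkp : (k, p) ∈ L1)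
    (hk2 : ¬ usedIn L2 k) (x : Fin n → Bool) (hrun : run [L1, L2] x k = true) :
    run [L1, L2] (Function.update x k false) = Function.update (run [L1, L2] x) k false := by
  have hYk : run [L1, L2] x k = (x k && x p) := by
    rw [run_two, applyLayer_unused hk2, applyLayer_fst h1.2 hkp]
  rw [hYk] at hrun
  obtain ⟨hxk, hxp⟩ := Bool.and_eq_true_iff.1 hrun
  rw [run_two, run_two, step_min h1 hkp hxk hxp, step_unused hk2]

lemma flip_max (h1 : IsLayer L1) {k p : Fin n} (hpk : (p, k) ∈ L1)
    (hk2 : ¬ usedIn L2 k) (x : Fin n → Bool) (hrun : run [L1, L2] x k = false) :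
    run [L1, L2] (Function.update x k true) = Function.update (run [L1, L2] x) k true := by
  have hne : ∀ c ∈ L1, c.1 ≠ c.2 := fun c hc => ne_of_lt (h1.1 c hc)
  have hYk : run [L1, L2] x k = (x p || x k) := by
    rw [run_two, applyLayer_unused hk2, applyLayer_snd h1.2 hne hpk]
  rw [hYk] at hrun
  obtain ⟨hxp, hxk⟩ := Bool.or_eq_false_iff.1 hrun
  rw [run_two, run_two, step_max h1 hpk hxp hxk, step_unused hk2]

lemma flex_swap (h1 : IsLayer L1) {d u : Fin n}
    (hd2 : ¬ usedIn L2 d) (hu2 : ¬ usedIn L2 u) (hdu : d ≠ u)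
    (hD : ¬ usedIn L1 d ∨ ∃ p, (d, p) ∈ L1)
    (hU : ¬ usedIn L1 u ∨ ∃ p, (p, u) ∈ L1)
    (x : Fin n → Bool) (hxd : run [L1, L2] x d = true) (hxu : run [L1, L2] x u = false) :
    ∃ x₂, run [L1, L2] x₂ =
      Function.update (Function.update (run [L1, L2] x) d false) u true := by
  obtain ⟨x₁, e1⟩ : ∃ x₁, run [L1, L2] x₁ = Function.update (run [L1, L2] x) d false := by
    rcases hD with hfree | ⟨p, hp⟩
    · exact ⟨_, flip_free hfree hd2 x false⟩
    · exact ⟨_, flip_min h1 hp hd2 x hxd⟩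
  have hy1u : run [L1, L2] x₁ u = false := by
    rw [e1, Function.update_of_ne hdu.symm]; exact hxu
  rcases hU with hfree | ⟨p, hp⟩
  · exact ⟨_, by rw [flip_free hfree hu2 x₁ true, e1]⟩
  · exact ⟨_, by rw [flip_max h1 hp hu2 x₁ hy1u, e1]⟩

end Flip
section Realize

variable {n : ℕ} {L1 L2 : Layer n}

lemma joined_symm {L : Layer n} {a b : Fin n} (h : Joined L a b) : Joined L b a :=
  h.symm

lemma realize (h1 : IsLayer L1) {d u : Fin n}
    (hd2 : ¬ usedIn L2 d) (hu2 : ¬ usedIn L2 u) (hdu : d ≠ u)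
    (hnJ : ¬ Joined L1 d u) (v w : Bool) :
    ∃ y ∈ outputs [L1, L2], y d = v ∧ y u = w := by
  classical
  have hne : ∀ c ∈ L1, c.1 ≠ c.2 := fun c hc => ne_of_lt (h1.1 c hc)
  set x : Fin n → Bool := fun m =>
    if m = d ∨ Joined L1 d m then v else if m = u ∨ Joined L1 u m then w else false with hx
  have hxd : x d = v := by simp only [hx]; exact if_pos (Or.inl trivial)
  have hcu : ¬ (u = d ∨ Joined L1 d u) := by
    rintro (h | h)
    · exact hdu h.symm
    · exact hnJ h
  have hxu : x u = w := by
    simp only [hx]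
    rw [if_neg hcu, if_pos (Or.inl trivial)]
  have hxdp : ∀ p, Joined L1 d p → x p = v := by
    intro p hp
    simp only [hx]; exact if_pos (Or.inr hp)
  have hxup : ∀ q, Joined L1 u q → x q = w := by
    intro q hq
    have hcq : ¬ (q = d ∨ Joined L1 d q) := by
      rintro (h | h)
      · rw [h] at hq
        exact hnJ (joined_symm hq)
      · rcases h with h | h <;> rcases hq with h' | h'
        · have he := unique_of_mem h1.2 h h' (Or.inr (Or.inr (Or.inr rfl)))
          obtain ⟨e1, e2⟩ := Prod.ext_iff.mp he
          exact hdu e1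
        · have he := unique_of_mem h1.2 h h' (Or.inr (Or.inr (Or.inl rfl)))
          obtain ⟨e1, e2⟩ := Prod.ext_iff.mp he
          exact hdu (e1.trans e2)
        · have he := unique_of_mem h1.2 h h' (Or.inr (Or.inl rfl))
          obtain ⟨e1, e2⟩ := Prod.ext_iff.mp he
          exact hdu (e2.trans e1)
        · have he := unique_of_mem h1.2 h h' (Or.inl rfl)
          obtain ⟨e1, e2⟩ := Prod.ext_iff.mp he
          exact hdu e2
    simp only [hx]
    rw [if_neg hcq, if_pos (Or.inr hq)]
  have key : ∀ (k : Fin n) (z : Bool), ¬ usedIn L2 k → x k = z →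
      (∀ p, Joined L1 k p → x p = z) → run [L1, L2] x k = z := by
    intro k z hk2 hxk hxp
    rw [run_two, applyLayer_unused hk2]
    rcases status L1 k with hfree | ⟨p, hp⟩ | ⟨p, hp⟩
    · rw [applyLayer_unused hfree, hxk]
    · rw [applyLayer_fst h1.2 hp, hxk, hxp p (Or.inl hp), Bool.and_self]
    · rw [applyLayer_snd h1.2 hne hp, hxk, hxp p (Or.inr hp), Bool.or_self]
  exact ⟨run [L1, L2] x, ⟨x, rfl⟩,
    key d v hd2 hxd hxdp, key u w hu2 hxu hxup⟩

end Realize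
section Insert

variable {n : ℕ} {L1 L2 : Layer n}

/-- The effect of a comparator `(a,b)` on an output vector. -/
def cmpv (a b : Fin n) (y : Fin n → Bool) : Fin n → Bool :=
  Function.update (Function.update y a (y a && y b)) b (y a || y b)

/-- Swap the coordinates `a` and `b`. -/
def swv (a b : Fin n) (y : Fin n → Bool) : Fin n → Bool :=
  Function.update (Function.update y a (y b)) b (y a)

lemma cmpv_apply_a {a b : Fin n} (hab : a ≠ b) (y : Fin n → Bool) :
    cmpv a b y a = (y a && y b) := by
  rw [cmpv, Function.update_of_ne hab, Function.update_self]

lemma cmpv_apply_b {a b : Fin n} (y : Fin n → Bool) :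
    cmpv a b y b = (y a || y b) := by
  rw [cmpv, Function.update_self]

lemma cmpv_eq_self {a b : Fin n} (hab : a ≠ b) {y : Fin n → Bool}
    (h : ¬ (y a = true ∧ y b = false)) : cmpv a b y = y := by
  have h1 : (y a && y b) = y a := by
    cases hya : y a <;> cases hyb : y b <;> simp_all
  have h2 : (y a || y b) = y b := by
    cases hya : y a <;> cases hyb : y b <;> simp_all
  rw [cmpv, h1, Function.update_eq_self, h2, Function.update_eq_self]

lemma cmpv_of_tf {a b : Fin n} {y : Fin n → Bool}
    (ha : y a = true) (hb : y b = false) :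
    cmpv a b y = Function.update (Function.update y a false) b true := by
  rw [cmpv, ha, hb]
  simp

lemma swv_of_vals {a b : Fin n} {y : Fin n → Bool} {v w : Bool}
    (ha : y a = v) (hb : y b = w) :
    swv a b y = Function.update (Function.update y a w) b v := by
  rw [swv, ha, hb]

lemma swv_eq_self {a b : Fin n} {y : Fin n → Bool} (h : y a = y b) :
    swv a b y = y := by
  rw [swv, ← h, Function.update_eq_self, h, Function.update_eq_self]

lemma isLayer_insert (h2 : IsLayer L2) {a b : Fin n} (hab : a < b)
    (ha2 : ¬ usedIn L2 a) (hb2 : ¬ usedIn L2 b) :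
    IsLayer (insert ((a, b) : Comp n) L2) := by
  constructor
  · intro c hc
    rcases Finset.mem_insert.1 hc with rfl | hc
    · exact hab
    · exact h2.1 c hc
  · intro c hc c' hc' hne
    rcases Finset.mem_insert.1 hc with rfl | hc <;>
      rcases Finset.mem_insert.1 hc' with h' | hc'
    · exact absurd h'.symm hne
    · refine ⟨?_, ?_, ?_, ?_⟩ <;> rintro h
      · exact ha2 ⟨c', hc', Or.inl h.symm⟩
      · exact ha2 ⟨c', hc', Or.inr h.symm⟩
      · exact hb2 ⟨c', hc', Or.inl h.symm⟩
      · exact hb2 ⟨c', hc', Or.inr h.symm⟩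
    · subst h'
      refine ⟨?_, ?_, ?_, ?_⟩ <;> rintro h
      · exact ha2 ⟨c, hc, Or.inl h⟩
      · exact hb2 ⟨c, hc, Or.inl h⟩
      · exact ha2 ⟨c, hc, Or.inr h⟩
      · exact hb2 ⟨c, hc, Or.inr h⟩
    · exact h2.2 c hc c' hc' hne

lemma run_insert (h2 : IsLayer L2) {a b : Fin n} (hab : a < b)
    (ha2 : ¬ usedIn L2 a) (hb2 : ¬ usedIn L2 b) (x : Fin n → Bool) :
    run [L1, insert ((a, b) : Comp n) L2] x = cmpv a b (run [L1, L2] x) := by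
  have hI := isLayer_insert h2 hab ha2 hb2
  have hIne : ∀ c ∈ insert ((a, b) : Comp n) L2, c.1 ≠ c.2 :=
    fun c hc => ne_of_lt (hI.1 c hc)
  have h2ne : ∀ c ∈ L2, c.1 ≠ c.2 := fun c hc => ne_of_lt (h2.1 c hc)
  have hne : a ≠ b := ne_of_lt hab
  have hmem : ((a, b) : Comp n) ∈ insert ((a, b) : Comp n) L2 := Finset.mem_insert_self _ _
  rw [run_two, run_two]
  set Y := applyLayer L1 x with hY
  funext m
  by_cases hm : m = b
  · subst hm
    rw [applyLayer_snd hI.2 hIne hmem, cmpv_apply_b,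
      applyLayer_unused ha2, applyLayer_unused hb2]
  · by_cases hm' : m = a
    · subst hm'
      rw [applyLayer_fst hI.2 hmem, cmpv_apply_a hne,
        applyLayer_unused ha2, applyLayer_unused hb2]
    · have hc : cmpv a b (applyLayer L2 Y) m = applyLayer L2 Y m := by
        rw [cmpv, Function.update_of_ne hm, Function.update_of_ne hm']
      rw [hc]
      rcases status L2 m with hfree | ⟨p, hp⟩ | ⟨p, hp⟩
      · have hfree' : ¬ usedIn (insert ((a, b) : Comp n) L2) m := by
          rintro ⟨c, hc', hend⟩
          rcases Finset.mem_insert.1 hc' with rfl | hc'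
          · rcases hend with h | h
            · exact hm' h.symm
            · exact hm h.symm
          · exact hfree ⟨c, hc', hend⟩
        rw [applyLayer_unused hfree', applyLayer_unused hfree]
      · rw [applyLayer_fst hI.2 (Finset.mem_insert_of_mem hp), applyLayer_fst h2.2 hp]
      · rw [applyLayer_snd hI.2 hIne (Finset.mem_insert_of_mem hp),
          applyLayer_snd h2.2 h2ne hp]

lemma outputs_insert (h2 : IsLayer L2) {a b : Fin n} (hab : a < b)
    (ha2 : ¬ usedIn L2 a) (hb2 : ¬ usedIn L2 b) :
    outputs [L1, insert ((a, b) : Comp n) L2] = cmpv a b '' outputs [L1, L2] := by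
  have : run [L1, insert ((a, b) : Comp n) L2] = cmpv a b ∘ run [L1, L2] :=
    funext fun x => run_insert h2 hab ha2 hb2 x
  rw [outputs, this, Set.range_comp]
  rfl

lemma permSet_one (X : Set (Fin n → Bool)) : permSet (1 : Equiv.Perm (Fin n)) X = X := by
  have h : permVec (1 : Equiv.Perm (Fin n)) = id := funext fun x => funext fun m => rfl
  rw [permSet, h, Set.image_id]

lemma swv_apply (a b : Fin n) (y : Fin n → Bool) (m : Fin n) :
    swv a b y m = if m = b then y a else if m = a then y b else y m := by
  rw [swv, Function.update_apply, Function.update_apply]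

lemma permVec_swap {a b : Fin n} (z : Fin n → Bool) :
    permVec (Equiv.swap a b) z = swv a b z := by
  funext m
  rw [permVec, Equiv.symm_swap, swv_apply]
  by_cases hm : m = b
  · rw [if_pos hm, hm, Equiv.swap_apply_right]
  · rw [if_neg hm]
    by_cases hm' : m = a
    · rw [if_pos hm', hm', Equiv.swap_apply_left]
    · rw [if_neg hm', Equiv.swap_apply_of_ne_of_ne hm' hm]

lemma permSet_swap {a b : Fin n} (X : Set (Fin n → Bool)) :
    permSet (Equiv.swap a b) X = swv a b '' X := by
  have h : permVec (Equiv.swap a b) = swv a b := funext permVec_swap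
  rw [permSet, h]

end Insert
section Crunch

variable {n : ℕ} {L1 L2 : Layer n}

lemma notMem_cmpv_image {a b : Fin n} (hab : a ≠ b) {y0 : Fin n → Bool}
    (ha0 : y0 a = true) (hb0 : y0 b = false) {X : Set (Fin n → Bool)} :
    y0 ∉ cmpv a b '' X := by
  rintro ⟨y, _, he⟩
  have ha' : y0 a = (y a && y b) := by rw [← he, cmpv_apply_a hab]
  have hb' : y0 b = (y a || y b) := by rw [← he, cmpv_apply_b]
  rw [ha0] at ha'
  rw [hb0] at hb'
  obtain ⟨e1, e2⟩ := Bool.and_eq_true_iff.1 ha'.symm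
  rw [e1, e2] at hb'
  exact Bool.noConfusion hb'

lemma crunch (h1 : IsLayer L1) (h2 : IsLayer L2) (hsat : Saturated L1 L2)
    {a b : Fin n} (hab : a < b) (ha2 : ¬ usedIn L2 a) (hb2 : ¬ usedIn L2 b)
    (Hswap : ∀ x : Fin n → Bool, run [L1, L2] x a = true → run [L1, L2] x b = false →
      Function.update (Function.update (run [L1, L2] x) a false) b true ∈ outputs [L1, L2])
    (Hex : ∃ y ∈ outputs [L1, L2], y a = true ∧ y b = false) : False := by
  have hne : a ≠ b := ne_of_lt hab
  have hsub : cmpv a b '' outputs [L1, L2] ⊆ outputs [L1, L2] := by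
    rintro z ⟨y, ⟨x, rfl⟩, rfl⟩
    by_cases hc : run [L1, L2] x a = true ∧ run [L1, L2] x b = false
    · rw [cmpv_of_tf hc.1 hc.2]
      exact Hswap x hc.1 hc.2
    · rw [cmpv_eq_self hne hc]
      exact ⟨x, rfl⟩
  obtain ⟨y0, hy0, ha0, hb0⟩ := Hex
  have hss : cmpv a b '' outputs [L1, L2] ⊂ outputs [L1, L2] :=
    (Set.ssubset_iff_of_subset hsub).2 ⟨y0, hy0, notMem_cmpv_image hne ha0 hb0⟩
  refine hsat.2 ⟨((a, b) : Comp n), 1, hab, ha2, hb2, ?_⟩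
  rw [outputs_insert h2 hab ha2 hb2, permSet_one]
  exact hss

lemma crunch2 (h1 : IsLayer L1) (h2 : IsLayer L2) (hsat : Saturated L1 L2)
    {a b : Fin n} (hab : a < b) (ha2 : ¬ usedIn L2 a) (hb2 : ¬ usedIn L2 b)
    (Hswap : ∀ x : Fin n → Bool, run [L1, L2] x b = true → run [L1, L2] x a = false →
      Function.update (Function.update (run [L1, L2] x) b false) a true ∈ outputs [L1, L2])
    (Hex : ∃ y ∈ outputs [L1, L2], y a = false ∧ y b = true) : False := by
  have hne : a ≠ b := ne_of_lt hab
  have hsub : cmpv a b '' outputs [L1, L2] ⊆ swv a b '' outputs [L1, L2] := by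
    rintro z ⟨y, hyS, rfl⟩
    obtain ⟨x, rfl⟩ := hyS
    set y := run [L1, L2] x with hy
    by_cases hc : y a = true ∧ y b = false
    · refine ⟨y, ⟨x, rfl⟩, ?_⟩
      rw [swv_of_vals hc.1 hc.2, ← cmpv_of_tf hc.1 hc.2]
    · rw [cmpv_eq_self hne hc]
      by_cases hc2 : y a = false ∧ y b = true
      · have hw := Hswap x hc2.2 hc2.1
        refine ⟨_, hw, ?_⟩
        set w := Function.update (Function.update y b false) a true with hwdef
        have hwa : w a = true := by rw [hwdef, Function.update_self]
        have hwb : w b = false := by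
          rw [hwdef, Function.update_of_ne hne.symm, Function.update_self]
        rw [swv_of_vals hwa hwb]
        funext m
        by_cases hm : m = b
        · rw [hm, Function.update_self, hc2.2]
        · rw [Function.update_of_ne hm]
          by_cases hm' : m = a
          · rw [hm', Function.update_self, hc2.1]
          · rw [Function.update_of_ne hm', hwdef, Function.update_of_ne hm',
              Function.update_of_ne hm]
      · have hval : y a = y b := by
          cases hya : y a <;> cases hyb : y b <;> simp_all
        exact ⟨y, ⟨x, rfl⟩, swv_eq_self hval⟩
  obtain ⟨y0, hy0, ha0, hb0⟩ := Hex
  have hw0 : swv a b y0 ∈ swv a b '' outputs [L1, L2] := ⟨y0, hy0, rfl⟩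
  have hw0a : swv a b y0 a = true := by
    rw [swv_of_vals ha0 hb0, Function.update_of_ne hne, Function.update_self]
  have hw0b : swv a b y0 b = false := by
    rw [swv_of_vals ha0 hb0, Function.update_self]
  have hss : cmpv a b '' outputs [L1, L2] ⊂ swv a b '' outputs [L1, L2] :=
    (Set.ssubset_iff_of_subset hsub).2
      ⟨swv a b y0, hw0, notMem_cmpv_image hne hw0a hw0b⟩
  refine hsat.2 ⟨((a, b) : Comp n), Equiv.swap a b, hab, ha2, hb2, ?_⟩
  rw [outputs_insert h2 hab ha2 hb2, permSet_swap]
  exact hss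

end Crunch
section NotDU

variable {n : ℕ} {L1 L2 : Layer n}

lemma not_DU (h1 : IsLayer L1) (h2 : IsLayer L2) (hsat : Saturated L1 L2)
    {d u : Fin n} (hdu : d ≠ u) (hd2 : ¬ usedIn L2 d) (hu2 : ¬ usedIn L2 u)
    (hnJ : ¬ Joined L1 d u)
    (hD : ¬ usedIn L1 d ∨ ∃ p, (d, p) ∈ L1)
    (hU : ¬ usedIn L1 u ∨ ∃ p, (p, u) ∈ L1) : False := by
  rcases lt_or_gt_of_ne hdu with hlt | hlt
  · -- a = d < b = u : scenario S1
    refine crunch h1 h2 hsat hlt hd2 hu2 ?_ ?_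
    · intro x hxd hxu
      obtain ⟨x₂, hx₂⟩ := flex_swap h1 hd2 hu2 hdu hD hU x hxd hxu
      exact ⟨x₂, hx₂⟩
    · obtain ⟨y, hy, hyd, hyu⟩ := realize h1 hd2 hu2 hdu hnJ true false
      exact ⟨y, hy, hyd, hyu⟩
  · -- u < d : scenario S2 with a = u, b = d
    have hnJ' : ¬ Joined L1 u d := fun h => hnJ (joined_symm h)
    refine crunch2 h1 h2 hsat hlt hu2 hd2 ?_ ?_
    · intro x hxd hxu
      obtain ⟨x₂, hx₂⟩ := flex_swap h1 hd2 hu2 hdu hD hU x hxd hxu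
      exact ⟨x₂, hx₂⟩
    · obtain ⟨y, hy, hyu, hyd⟩ := realize h1 hu2 hd2 hdu.symm hnJ' false true
      exact ⟨y, hy, hyu, hyd⟩

end NotDU
section Flex3

variable {n : ℕ} {L1 L2 : Layer n}

lemma endpoint_ne {L : Layer n} (hL : NoOverlap L) {a b m : Fin n}
    (hab : (a, b) ∈ L) {c : Comp n} (hc : c ∈ L)
    (hcm : c.1 = m ∨ c.2 = m) (hma : m ≠ a) (hmb : m ≠ b) {r : Fin n}
    (hcr : c.1 = r ∨ c.2 = r) : r ≠ a ∧ r ≠ b := by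
  have hcne : c ≠ (a, b) := by
    rintro rfl
    rcases hcm with h | h
    · exact hma h.symm
    · exact hmb h.symm
  obtain ⟨n1, n2, n3, n4⟩ := hL c hc _ hab hcne
  constructor <;> rcases hcr with h | h
  · exact h ▸ n1
  · exact h ▸ n3
  · exact h ▸ n2
  · exact h ▸ n4

lemma flex3_min (h1 : IsLayer L1) (h2 : IsLayer L2) {i j p q : Fin n}
    (hi2 : ¬ usedIn L2 i) (hj2 : ¬ usedIn L2 j)
    (hiL : (i, p) ∈ L1) (hjL : (j, q) ∈ L1) (hij : i ≠ j)
    (hpq : (p, q) ∈ L2 ∨ (q, p) ∈ L2)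
    (x : Fin n → Bool) (hyi : run [L1, L2] x i = true) (hyj : run [L1, L2] x j = false) :
    Function.update (Function.update (run [L1, L2] x) i false) j true ∈ outputs [L1, L2] := by
  classical
  have hne1 : ∀ c ∈ L1, c.1 ≠ c.2 := fun c hc => ne_of_lt (h1.1 c hc)
  have hne2 : ∀ c ∈ L2, c.1 ≠ c.2 := fun c hc => ne_of_lt (h2.1 c hc)
  have hip : i ≠ p := hne1 _ hiL
  have hjq : j ≠ q := hne1 _ hjL
  have hcne : ((i, p) : Comp n) ≠ (j, q) := fun he => hij (congrArg Prod.fst he)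
  obtain ⟨hij', hiq, hpj, hpq'⟩ := h1.2 _ hiL _ hjL hcne
  set y := run [L1, L2] x with hy
  set Y := applyLayer L1 x with hYdef
  have hyi' : Y i = true := by
    rw [← hyi, hy, run_two, applyLayer_unused hi2]
  have hyj' : Y j = false := by
    rw [← hyj, hy, run_two, applyLayer_unused hj2]
  have hYi : Y i = (x i && x p) := applyLayer_fst h1.2 hiL x
  obtain ⟨hxi, hxp⟩ : x i = true ∧ x p = true :=
    Bool.and_eq_true_iff.1 (hYi ▸ hyi')
  set Qv := (x j || x q) with hQv
  have hYp : Y p = true := by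
    rw [hYdef, applyLayer_snd h1.2 hne1 hiL, hxi, Bool.true_or]
  have hYq : Y q = Qv := applyLayer_snd h1.2 hne1 hjL x
  set x' : Fin n → Bool := fun m =>
    if m = i then false else if m = p then Qv
    else if m = j then true else if m = q then true else x m with hx'
  have hx'i : x' i = false := by simp [hx']
  have hx'p : x' p = Qv := by simp [hx', hip.symm]
  have hx'j : x' j = true := by simp [hx', hij.symm, hpj.symm]
  have hx'q : x' q = true := by simp [hx', hiq.symm, hpq'.symm, hjq.symm]
  have hx'gen : ∀ r, r ≠ i → r ≠ p → r ≠ j → r ≠ q → x' r = x r := by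
    intro r h1' h2' h3' h4'
    simp [hx', h1', h2', h3', h4']
  set Y' := applyLayer L1 x' with hY'def
  have hY'i : Y' i = false := by
    rw [hY'def, applyLayer_fst h1.2 hiL, hx'i, Bool.false_and]
  have hY'p : Y' p = Qv := by
    rw [hY'def, applyLayer_snd h1.2 hne1 hiL, hx'i, hx'p, Bool.false_or]
  have hY'j : Y' j = true := by
    rw [hY'def, applyLayer_fst h1.2 hjL, hx'j, hx'q, Bool.and_self]
  have hY'q : Y' q = true := by
    rw [hY'def, applyLayer_snd h1.2 hne1 hjL, hx'j, Bool.true_or]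
  have hYgen : ∀ m, m ≠ i → m ≠ p → m ≠ j → m ≠ q → Y' m = Y m := by
    intro m hmi hmp hmj hmq
    apply applyLayer_congr
    intro r hr
    rcases hr with rfl | ⟨c, hc, hcm, hcr⟩
    · exact hx'gen r hmi hmp hmj hmq
    · obtain ⟨hri, hrp⟩ := endpoint_ne h1.2 hiL hc hcm hmi hmp hcr
      obtain ⟨hrj, hrq⟩ := endpoint_ne h1.2 hjL hc hcm hmj hmq hcr
      exact hx'gen r hri hrp hrj hrq
  refine ⟨x', ?_⟩
  funext m
  rw [run_two, ← hY'def]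
  by_cases hmi : m = i
  · subst hmi
    rw [applyLayer_unused hi2, hY'i, Function.update_of_ne hij, Function.update_self]
  · by_cases hmj : m = j
    · subst hmj
      rw [applyLayer_unused hj2, hY'j, Function.update_self]
    · rw [Function.update_of_ne hmj, Function.update_of_ne hmi, hy, run_two, ← hYdef]
      by_cases hmp : m = p
      · subst hmp
        rcases hpq with hL2 | hL2
        · rw [applyLayer_fst h2.2 hL2, applyLayer_fst h2.2 hL2,
            hY'p, hY'q, hYp, hYq, Bool.and_true, Bool.true_and]
        · rw [applyLayer_snd h2.2 hne2 hL2, applyLayer_snd h2.2 hne2 hL2,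
            hY'p, hY'q, hYp, hYq, Bool.true_or, Bool.or_true]
      · by_cases hmq : m = q
        · subst hmq
          rcases hpq with hL2 | hL2
          · rw [applyLayer_snd h2.2 hne2 hL2, applyLayer_snd h2.2 hne2 hL2,
              hY'p, hY'q, hYp, hYq, Bool.or_true, Bool.true_or]
          · rw [applyLayer_fst h2.2 hL2, applyLayer_fst h2.2 hL2,
              hY'p, hY'q, hYp, hYq, Bool.true_and, Bool.and_true]
        · apply applyLayer_congr
          intro r hr
          rcases hr with rfl | ⟨c, hc, hcm, hcr⟩
          · exact hYgen r hmi hmp hmj hmq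
          · have hri : r ≠ i := by rintro rfl; exact hi2 ⟨c, hc, hcr⟩
            have hrj : r ≠ j := by rintro rfl; exact hj2 ⟨c, hc, hcr⟩
            have hrpq : r ≠ p ∧ r ≠ q := by
              rcases hpq with hL2 | hL2
              · exact endpoint_ne h2.2 hL2 hc hcm hmp hmq hcr
              · exact (endpoint_ne h2.2 hL2 hc hcm hmq hmp hcr).symm
            exact hYgen r hri hrpq.1 hrj hrpq.2

end Flex3
section Flex3Max

variable {n : ℕ} {L1 L2 : Layer n}

lemma flex3_max (h1 : IsLayer L1) (h2 : IsLayer L2) {i j p q : Fin n}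
    (hi2 : ¬ usedIn L2 i) (hj2 : ¬ usedIn L2 j)
    (hiL : (p, i) ∈ L1) (hjL : (q, j) ∈ L1) (hij : i ≠ j)
    (hpq : (p, q) ∈ L2 ∨ (q, p) ∈ L2)
    (x : Fin n → Bool) (hyi : run [L1, L2] x i = true) (hyj : run [L1, L2] x j = false) :
    Function.update (Function.update (run [L1, L2] x) i false) j true ∈ outputs [L1, L2] := by
  classical
  have hne1 : ∀ c ∈ L1, c.1 ≠ c.2 := fun c hc => ne_of_lt (h1.1 c hc)
  have hne2 : ∀ c ∈ L2, c.1 ≠ c.2 := fun c hc => ne_of_lt (h2.1 c hc)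
  have hpi : p ≠ i := hne1 _ hiL
  have hqj : q ≠ j := hne1 _ hjL
  have hcne : ((p, i) : Comp n) ≠ (q, j) := fun he => hij (congrArg Prod.snd he)
  obtain ⟨hpq', hpj, hiq, hij'⟩ := h1.2 _ hiL _ hjL hcne
  set y := run [L1, L2] x with hy
  set Y := applyLayer L1 x with hYdef
  have hyi' : Y i = true := by
    rw [← hyi, hy, run_two, applyLayer_unused hi2]
  have hyj' : Y j = false := by
    rw [← hyj, hy, run_two, applyLayer_unused hj2]
  have hYj : Y j = (x q || x j) := applyLayer_snd h1.2 hne1 hjL x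
  obtain ⟨hxq, hxj⟩ : x q = false ∧ x j = false :=
    Bool.or_eq_false_iff.1 (hYj ▸ hyj')
  set Pv := (x p && x i) with hPv
  have hYp : Y p = Pv := applyLayer_fst h1.2 hiL x
  have hYq : Y q = false := by
    rw [hYdef, applyLayer_fst h1.2 hjL, hxq, Bool.false_and]
  set x' : Fin n → Bool := fun m =>
    if m = i then false else if m = p then false
    else if m = j then true else if m = q then Pv else x m with hx'
  have hx'i : x' i = false := by simp [hx']
  have hx'p : x' p = false := by simp [hx', hpi]
  have hx'j : x' j = true := by simp [hx', hij.symm, hpj.symm]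
  have hx'q : x' q = Pv := by simp [hx', hiq.symm, hpq'.symm, hqj]
  have hx'gen : ∀ r, r ≠ i → r ≠ p → r ≠ j → r ≠ q → x' r = x r := by
    intro r h1' h2' h3' h4'
    simp [hx', h1', h2', h3', h4']
  set Y' := applyLayer L1 x' with hY'def
  have hY'i : Y' i = false := by
    rw [hY'def, applyLayer_snd h1.2 hne1 hiL, hx'i, hx'p, Bool.or_self]
  have hY'p : Y' p = false := by
    rw [hY'def, applyLayer_fst h1.2 hiL, hx'p, Bool.false_and]
  have hY'j : Y' j = true := by
    rw [hY'def, applyLayer_snd h1.2 hne1 hjL, hx'j, Bool.or_true]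
  have hY'q : Y' q = Pv := by
    rw [hY'def, applyLayer_fst h1.2 hjL, hx'q, hx'j, Bool.and_true]
  have hYgen : ∀ m, m ≠ i → m ≠ p → m ≠ j → m ≠ q → Y' m = Y m := by
    intro m hmi hmp hmj hmq
    apply applyLayer_congr
    intro r hr
    rcases hr with rfl | ⟨c, hc, hcm, hcr⟩
    · exact hx'gen r hmi hmp hmj hmq
    · obtain ⟨hrp, hri⟩ := endpoint_ne h1.2 hiL hc hcm hmp hmi hcr
      obtain ⟨hrq, hrj⟩ := endpoint_ne h1.2 hjL hc hcm hmq hmj hcr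
      exact hx'gen r hri hrp hrj hrq
  refine ⟨x', ?_⟩
  funext m
  rw [run_two, ← hY'def]
  by_cases hmi : m = i
  · subst hmi
    rw [applyLayer_unused hi2, hY'i, Function.update_of_ne hij, Function.update_self]
  · by_cases hmj : m = j
    · subst hmj
      rw [applyLayer_unused hj2, hY'j, Function.update_self]
    · rw [Function.update_of_ne hmj, Function.update_of_ne hmi, hy, run_two, ← hYdef]
      by_cases hmp : m = p
      · subst hmp
        rcases hpq with hL2 | hL2
        · rw [applyLayer_fst h2.2 hL2, applyLayer_fst h2.2 hL2,
            hY'p, hY'q, hYp, hYq, Bool.and_false, Bool.false_and]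
        · rw [applyLayer_snd h2.2 hne2 hL2, applyLayer_snd h2.2 hne2 hL2,
            hY'p, hY'q, hYp, hYq, Bool.or_false, Bool.false_or]
      · by_cases hmq : m = q
        · subst hmq
          rcases hpq with hL2 | hL2
          · rw [applyLayer_snd h2.2 hne2 hL2, applyLayer_snd h2.2 hne2 hL2,
              hY'p, hY'q, hYp, hYq, Bool.false_or, Bool.or_false]
          · rw [applyLayer_fst h2.2 hL2, applyLayer_fst h2.2 hL2,
              hY'p, hY'q, hYp, hYq, Bool.false_and, Bool.and_false]
        · apply applyLayer_congr
          intro r hr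
          rcases hr with rfl | ⟨c, hc, hcm, hcr⟩
          · exact hYgen r hmi hmp hmj hmq
          · have hri : r ≠ i := by rintro rfl; exact hi2 ⟨c, hc, hcr⟩
            have hrj : r ≠ j := by rintro rfl; exact hj2 ⟨c, hc, hcr⟩
            have hrpq : r ≠ p ∧ r ≠ q := by
              rcases hpq with hL2 | hL2
              · exact endpoint_ne h2.2 hL2 hc hcm hmp hmq hcr
              · exact (endpoint_ne h2.2 hL2 hc hcm hmq hmp hcr).symm
            exact hYgen r hri hrpq.1 hrj hrpq.2

end Flex3Max
/-- in a saturated two-layer network, any two distinct channels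
`i, j` unused in the second layer and not joined in the first layer satisfy:
(i) both are used in the first layer; (ii) they are both min-channels or both
max-channels; (iii) their first-layer partners are not joined in layer 2. -/
theorem saturated_forbidden_patterns {n : ℕ} (L1 L2 : Layer n)
    (h1 : IsLayer L1) (h2 : IsLayer L2) (hsat : Saturated L1 L2)
    (i j : Fin n) (hij : i ≠ j)
    (hi2 : ¬ usedIn L2 i) (hj2 : ¬ usedIn L2 j) (hnotJ : ¬ Joined L1 i j) :
    (usedIn L1 i ∧ usedIn L1 j) ∧
    ((MinChan L1 i ∧ MinChan L1 j) ∨ (MaxChan L1 i ∧ MaxChan L1 j)) ∧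
    (∀ i' j' : Fin n, Joined L1 i i' → Joined L1 j j' → ¬ Joined L2 i' j') := by
  have hne1 : ∀ c ∈ L1, c.1 ≠ c.2 := fun c hc => ne_of_lt (h1.1 c hc)
  have hJsymm : ¬ Joined L1 j i := fun h => hnotJ (joined_symm h)
  have hui : usedIn L1 i := by
    by_contra hfree
    rcases status L1 j with hfj | ⟨q, hq⟩ | ⟨q, hq⟩
    · exact not_DU h1 h2 hsat hij hi2 hj2 hnotJ (Or.inl hfree) (Or.inl hfj)
    · exact not_DU h1 h2 hsat hij.symm hj2 hi2 hJsymm (Or.inr ⟨q, hq⟩) (Or.inl hfree)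
    · exact not_DU h1 h2 hsat hij hi2 hj2 hnotJ (Or.inl hfree) (Or.inr ⟨q, hq⟩)
  have huj : usedIn L1 j := by
    by_contra hfree
    rcases status L1 i with hfi | ⟨p, hp⟩ | ⟨p, hp⟩
    · exact hfi hui
    · exact not_DU h1 h2 hsat hij hi2 hj2 hnotJ (Or.inr ⟨p, hp⟩) (Or.inl hfree)
    · exact not_DU h1 h2 hsat hij.symm hj2 hi2 hJsymm (Or.inl hfree) (Or.inr ⟨p, hp⟩)
  have hpart2 : (MinChan L1 i ∧ MinChan L1 j) ∨ (MaxChan L1 i ∧ MaxChan L1 j) := by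
    rcases status L1 i with hfi | ⟨p, hp⟩ | ⟨p, hp⟩
    · exact absurd hui hfi
    · rcases status L1 j with hfj | ⟨q, hq⟩ | ⟨q, hq⟩
      · exact absurd huj hfj
      · exact Or.inl ⟨⟨(i, p), hp, rfl⟩, ⟨(j, q), hq, rfl⟩⟩
      · exact (not_DU h1 h2 hsat hij hi2 hj2 hnotJ (Or.inr ⟨p, hp⟩) (Or.inr ⟨q, hq⟩)).elim
    · rcases status L1 j with hfj | ⟨q, hq⟩ | ⟨q, hq⟩
      · exact absurd huj hfj
      · exact (not_DU h1 h2 hsat hij.symm hj2 hi2 hJsymm (Or.inr ⟨q, hq⟩) (Or.inr ⟨p, hp⟩)).elim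
      · exact Or.inr ⟨⟨(p, i), hp, rfl⟩, ⟨(q, j), hq, rfl⟩⟩
  refine ⟨⟨hui, huj⟩, hpart2, ?_⟩
  intro i' j' hii' hjj' hJ2
  have hpqJ : (i', j') ∈ L2 ∨ (j', i') ∈ L2 := hJ2
  rcases hpart2 with ⟨⟨ci, hci, hci1⟩, ⟨cj, hcj, hcj1⟩⟩ | ⟨⟨ci, hci, hci2⟩, ⟨cj, hcj, hcj2⟩⟩
  · -- both min channels
    have hii'min : (i, i') ∈ L1 := by
      rcases hii' with h | h
      · exact h
      · exfalso
        have he := unique_of_mem h1.2 hci h (Or.inr (Or.inl hci1))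
        rw [he] at hci1
        have hii : i' = i := hci1
        rw [hii] at h
        exact hne1 _ h rfl
    have hjj'min : (j, j') ∈ L1 := by
      rcases hjj' with h | h
      · exact h
      · exfalso
        have he := unique_of_mem h1.2 hcj h (Or.inr (Or.inl hcj1))
        rw [he] at hcj1
        have hjj : j' = j := hcj1
        rw [hjj] at h
        exact hne1 _ h rfl
    rcases lt_or_gt_of_ne hij with hlt | hlt
    · exact crunch h1 h2 hsat hlt hi2 hj2
        (fun x hxi hxj => flex3_min h1 h2 hi2 hj2 hii'min hjj'min hij hpqJ x hxi hxj)
        (realize h1 hi2 hj2 hij hnotJ true false)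
    · exact crunch h1 h2 hsat hlt hj2 hi2
        (fun x hxj hxi => flex3_min h1 h2 hj2 hi2 hjj'min hii'min hij.symm hpqJ.symm x hxj hxi)
        (realize h1 hj2 hi2 hij.symm hJsymm true false)
  · -- both max channels
    have hii'max : (i', i) ∈ L1 := by
      rcases hii' with h | h
      · exfalso
        have he := unique_of_mem h1.2 hci h (Or.inr (Or.inr (Or.inl hci2)))
        rw [he] at hci2
        have hii : i' = i := hci2
        rw [hii] at h
        exact hne1 _ h rfl
      · exact h
    have hjj'max : (j', j) ∈ L1 := by
      rcases hjj' with h | h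
      · exfalso
        have he := unique_of_mem h1.2 hcj h (Or.inr (Or.inr (Or.inl hcj2)))
        rw [he] at hcj2
        have hjj : j' = j := hcj2
        rw [hjj] at h
        exact hne1 _ h rfl
      · exact h
    rcases lt_or_gt_of_ne hij with hlt | hlt
    · exact crunch h1 h2 hsat hlt hi2 hj2
        (fun x hxi hxj => flex3_max h1 h2 hi2 hj2 hii'max hjj'max hij hpqJ x hxi hxj)
        (realize h1 hi2 hj2 hij hnotJ true false)
    · exact crunch h1 h2 hsat hlt hj2 hi2
        (fun x hxj hxi => flex3_max h1 h2 hj2 hi2 hjj'max hii'max hij.symm hpqJ.symm x hxj hxi)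
        (realize h1 hj2 hi2 hij.symm hJsymm true false)

end SN
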